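/- In the root system of type F₄, the Weyl group W acts transitively on ordered pairs (α, β) of orthogonal long roots. Equivalently, the stabiliser of the highest root φ in W is the parabolic subgroup W_{C₃} = ⟨s₂, s₃, s₄⟩, and this stabiliser acts transitively on the set of long roots orthogonal to φ. -/

import Mathlib

open scoped RealInnerProductSpace Pointwise

namespace Paper

variable {V : Type*} [NormedAddCommGroup V] [InnerProductSpace ℝ V]

/-- The orthogonal reflection in the hyperplane perpendicular to `α`
(by convention the identity if `α = 0`). -/
noncomputable def sref (α : V) : V ≃ₗ[ℝ] V :=
  letI := Classical.propDecidable (α = 0)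
  if h : α = 0 then LinearEquiv.refl ℝ V
  else
    Module.reflection (x := α) (f := (2 / ⟪α, α⟫) • (innerₛₗ ℝ α)) <| by
      have h' : ⟪α, α⟫ ≠ 0 := inner_self_ne_zero.mpr h
      have h2 : ((2 / ⟪α, α⟫) • (innerₛₗ ℝ α)) α = (2 / ⟪α, α⟫) * ⟪α, α⟫ := by
        simp
      rw [h2, div_mul_cancel₀ _ h']

/-- `Φ` is a (finite, reduced, crystallographic) root system in the real inner
product space `V`. -/
structure IsRootSystem (Φ : Set V) : Prop where
  finite : Φ.Finite
  nonzero : (0 : V) ∉ Φ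
  span_top : Submodule.span ℝ Φ = ⊤
  neg_mem : ∀ α ∈ Φ, -α ∈ Φ
  refl_mem : ∀ α ∈ Φ, ∀ β ∈ Φ, sref α β ∈ Φ
  crystallographic : ∀ α ∈ Φ, ∀ β ∈ Φ, ∃ m : ℤ, 2 * ⟪α, β⟫ / ⟪β, β⟫ = (m : ℝ)
  reduced : ∀ α ∈ Φ, ∀ t : ℝ, t • α ∈ Φ → t = 1 ∨ t = -1

/-- Irreducibility of a root system. -/
def IsIrreducible (Φ : Set V) : Prop :=
  ∀ Φ₁ Φ₂ : Set V, Φ = Φ₁ ∪ Φ₂ → (∀ α ∈ Φ₁, ∀ β ∈ Φ₂, ⟪α, β⟫ = 0) →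
    Φ₁ = ∅ ∨ Φ₂ = ∅

/-- `αs` is a system of simple roots for `Φ`, with corresponding set `Pos` of
positive roots. -/
structure IsBase {n : ℕ} (Φ : Set V) (αs : Fin n → V) (Pos : Set V) : Prop where
  mem : ∀ i, αs i ∈ Φ
  indep : LinearIndependent ℝ αs
  span_eq : Submodule.span ℝ (Set.range αs) = ⊤
  pos_subset : Pos ⊆ Φ
  mem_pos_iff : ∀ β ∈ Φ, (β ∈ Pos ↔ ∃ c : Fin n → ℕ, β = ∑ i, (c i : ℝ) • αs i)
  pos_or_neg : ∀ β ∈ Φ, β ∈ Pos ∨ -β ∈ Pos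

/-- The Weyl group of `Φ`: the subgroup of `GL(V)` generated by the reflections
in the roots. -/
noncomputable def weylGroup (Φ : Set V) : Subgroup (V ≃ₗ[ℝ] V) :=
  Subgroup.closure (sref '' Φ)

/-- The standard parabolic subgroup generated by the simple reflections `sref (αs i)`
for `i ∈ J`. -/
noncomputable def parab {n : ℕ} (αs : Fin n → V) (J : Set (Fin n)) :
    Subgroup (V ≃ₗ[ℝ] V) :=
  Subgroup.closure ((fun i => sref (αs i)) '' J)

/-- The inversion set `Φ(w) = {β ∈ Φ⁺ : w⁻¹ β ∈ −Φ⁺}`. -/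
def invSet (Pos : Set V) (w : V ≃ₗ[ℝ] V) : Set V :=
  {β ∈ Pos | -(w⁻¹ β) ∈ Pos}

/-- The length of a Weyl group element, as the number of inversions. -/
noncomputable def len (Pos : Set V) (w : V ≃ₗ[ℝ] V) : ℕ :=
  (invSet Pos w).ncard

/-- `φ` is the highest root of the positive system `Pos` with simple roots `αs`. -/
def IsHighestRoot {n : ℕ} (αs : Fin n → V) (Pos : Set V) (φ : V) : Prop :=
  φ ∈ Pos ∧ ∀ β ∈ Pos, ∃ c : Fin n → ℕ, φ - β = ∑ i, (c i : ℝ) • αs i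

/-- Adjacency in the Bourbaki-labelled Dynkin diagram of the `E`-series (nodes `1,…,8`). -/
def eAdj (i j : ℕ) : Prop :=
  (i, j) ∈ ([(1,3),(3,1),(3,4),(4,3),(4,5),(5,4),(5,6),(6,5),(6,7),(7,6),(7,8),(8,7),(2,4),(4,2)] :
    List (ℕ × ℕ))

instance (i j : ℕ) : Decidable (eAdj i j) := by unfold eAdj; infer_instance

/-- Cartan integers of the `E`-series (Bourbaki labelling, nodes `1,…,8`):
`E₆`, `E₇` and `E₈` are obtained by restricting to nodes `1,…,n`. -/
def cartanE (i j : ℕ) : ℝ :=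
  if i = j then 2 else if eAdj i j then -1 else 0

/-- Cartan integers of `F₄` (Bourbaki labelling, nodes `1,…,4`; `α₁, α₂` long,
`α₃, α₄` short), with the convention `C i j = 2(αᵢ,αⱼ)/(αⱼ,αⱼ)`. -/
def cartanF (i j : ℕ) : ℝ :=
  if i = j then 2 else
  if (i, j) ∈ ([(1,2),(2,1),(3,2),(3,4),(4,3)] : List (ℕ × ℕ)) then -1 else
  if (i, j) = (2,3) then -2 else 0

/-- Cartan integers of `Aₙ` (nodes `1,…,n`). -/
def cartanA (i j : ℕ) : ℝ :=
  if i = j then 2 else if i + 1 = j ∨ j + 1 = i then -1 else 0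

/-- The simple roots `αs` realise the Cartan matrix `C` (indexed by nodes `1,…,n`). -/
def CartanIs {n : ℕ} (αs : Fin n → V) (C : ℕ → ℕ → ℝ) : Prop :=
  ∀ i j : Fin n, 2 * ⟪αs i, αs j⟫ / ⟪αs j, αs j⟫ = C ((i : ℕ) + 1) ((j : ℕ) + 1)



set_option maxRecDepth 100000
abbrev Z4 := ℤ × ℤ × ℤ × ℤ

def co : Fin 4 → Z4 → ℤ
  | 0, p => p.1
  | 1, p => p.2.1
  | 2, p => p.2.2.1
  | 3, p => p.2.2.2

def eV : Fin 4 → Z4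
  | 0 => (1,0,0,0)
  | 1 => (0,1,0,0)
  | 2 => (0,0,1,0)
  | 3 => (0,0,0,1)

def BZ (p q : Z4) : ℤ :=
  4*p.1*q.1 + 4*p.2.1*q.2.1 + 2*p.2.2.1*q.2.2.1 + 2*p.2.2.2*q.2.2.2
    - 2*(p.1*q.2.1 + p.2.1*q.1) - 2*(p.2.1*q.2.2.1 + p.2.2.1*q.2.1)
    - (p.2.2.1*q.2.2.2 + p.2.2.2*q.2.2.1)

def mco : Fin 4 → Z4 → ℤ
  | 0, p => 2*p.1 - p.2.1
  | 1, p => -p.1 + 2*p.2.1 - p.2.2.1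
  | 2, p => -2*p.2.1 + 2*p.2.2.1 - p.2.2.2
  | 3, p => -p.2.2.1 + 2*p.2.2.2

def rAct : Fin 4 → Z4 → Z4
  | 0, p => (p.2.1 - p.1, p.2.1, p.2.2.1, p.2.2.2)
  | 1, p => (p.1, p.1 + p.2.2.1 - p.2.1, p.2.2.1, p.2.2.2)
  | 2, p => (p.1, p.2.1, 2*p.2.1 + p.2.2.2 - p.2.2.1, p.2.2.2)
  | 3, p => (p.1, p.2.1, p.2.2.1, p.2.2.1 - p.2.2.2)

def mact (l : List (Fin 4)) (p : Z4) : Z4 := l.foldr rAct p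

def negZ (p : Z4) : Z4 := (-p.1, -p.2.1, -p.2.2.1, -p.2.2.2)

def RposL : List Z4 := [(0, 0, 0, 1), (0, 0, 1, 0), (0, 0, 1, 1), (0, 1, 0, 0), (0, 1, 1, 0), (0, 1, 1, 1), (0, 1, 2, 0), (0, 1, 2, 1), (0, 1, 2, 2), (1, 0, 0, 0), (1, 1, 0, 0), (1, 1, 1, 0), (1, 1, 1, 1), (1, 1, 2, 0), (1, 1, 2, 1), (1, 1, 2, 2), (1, 2, 2, 0), (1, 2, 2, 1), (1, 2, 2, 2), (1, 2, 3, 1), (1, 2, 3, 2), (1, 2, 4, 2), (1, 3, 4, 2), (2, 3, 4, 2)]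

def wtpTbl : List (Z4 × List (Fin 4)) := [((-2, -3, -4, -2), [0, 1, 2, 3, 1, 2, 0, 1, 2, 3, 0, 1, 2, 1, 0]), ((-1, -3, -4, -2), [0, 1, 2, 3, 1, 2, 0, 1, 2, 3, 0, 1, 2, 1]), ((-1, -2, -4, -2), [0, 1, 2, 3, 1, 2, 0, 1, 2, 3, 0, 1, 2]), ((-1, -2, -2, -2), [0, 1, 2, 3, 1, 2, 0, 1, 2, 3, 0, 1]), ((-1, -2, -2, 0), [0, 1, 2, 3, 1, 2, 0, 1, 2, 0, 1]), ((-1, -1, -2, -2), [0, 1, 2, 3, 1, 2, 0, 1, 2, 3, 0]), ((-1, -1, -2, 0), [0, 1, 2, 3, 1, 2, 0, 1, 2, 0]), ((-1, -1, 0, 0), [0, 1, 2, 3, 1, 2, 0, 1, 0]), ((-1, 0, 0, 0), [0, 1, 2, 3, 1, 2, 1, 0]), ((0, -1, -2, -2), [0, 1, 2, 3, 1, 2, 0, 1, 2, 3]), ((0, -1, -2, 0), [0, 1, 2, 3, 1, 2, 0, 1, 2]), ((0, -1, 0, 0), [0, 1, 2, 3, 1, 2, 0, 1]), ((0, 1,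 0, 0), [0, 1, 2, 3, 1, 2, 0]), ((0, 1, 2, 0), [0, 1, 2, 3, 1, 0]), ((0, 1, 2, 2), [0, 1, 2, 1, 0]), ((1, 0, 0, 0), [0, 1, 2, 3, 1, 2, 1]), ((1, 1, 0, 0), [0, 1, 2, 3, 1, 2]), ((1, 1, 2, 0), [0, 1, 2, 3, 1]), ((1, 1, 2, 2), [0, 1, 2, 1]), ((1, 2, 2, 0), [0, 1, 2, 3]), ((1, 2, 2, 2), [0, 1, 2]), ((1, 2, 4, 2), [0, 1]), ((1, 3, 4, 2), [0]), ((2, 3, 4, 2), [])]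

def wfxTbl : List (Z4 × List (Fin 4)) := [((0, -1, -2, -2), []), ((0, -1, -2, 0), [3]), ((0, -1, 0, 0), [3, 2]), ((0, 1, 0, 0), [3, 2, 1]), ((0, 1, 2, 0), [3, 2, 1, 2]), ((0, 1, 2, 2), [3, 2, 1, 2, 3])]


def RallL : List Z4 := RposL ++ RposL.map negZ

def phiv : Z4 := (2,3,4,2)
def b0v : Z4 := (0,-1,-2,-2)

def wtp (p : Z4) : List (Fin 4) := (wtpTbl.lookup p).getD []
def wfx (p : Z4) : List (Fin 4) := (wfxTbl.lookup p).getD []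

lemma rAct_eq (i : Fin 4) (p : Z4) :
    rAct i p = (co 0 p - (if i = 0 then mco i p else 0), co 1 p - (if i = 1 then mco i p else 0),
      co 2 p - (if i = 2 then mco i p else 0), co 3 p - (if i = 3 then mco i p else 0)) := by
  fin_cases i <;> simp [rAct, co, mco] <;> ring_nf <;> simp [Prod.ext_iff] <;> ring

lemma F1 : ∀ p ∈ RallL, ∀ i : Fin 4, rAct i p ∈ RallL := by decide
lemma F2 : ∀ p ∈ RallL, negZ p ∈ RallL := by decide
lemma F3 : ∀ p ∈ RallL, 0 ≤ co 0 p → 0 ≤ co 1 p → 0 ≤ co 2 p → 0 ≤ co 3 p → p ∈ RposL := by decide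
lemma F3b : ∀ p ∈ RposL, p ∈ RallL := fun p h => List.mem_append_left _ h
lemma F4 : ∀ p ∈ RallL, BZ p p = 4 → mact (wtp p) p = phiv := by decide
lemma F5 : ∀ p ∈ RallL, BZ p p = 4 → BZ p phiv = 0 →
    (mact (wfx p) p = b0v ∧ ∀ i ∈ wfx p, i ≠ 0) := by decide
lemma F6 : ∀ i : Fin 4, i ≠ 0 → rAct i phiv = phiv := by decide
lemma F7 : ∀ f : Fin 4 → Fin 4, (∀ i j, BZ (eV (f i)) (eV (f j)) = BZ (eV i) (eV j)) → ∀ i, f i = i := by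
  decide
lemma F8 : ∀ i : Fin 4, rAct i (eV i) = negZ (eV i) := by decide
lemma F9 : ∀ i : Fin 4, eV i ∈ RposL := by decide
lemma F10 : BZ phiv phiv = 4 := by decide
lemma F11 : ∀ i : Fin 4, BZ phiv (eV i) = if i = 0 then 2 else 0 := by decide
lemma co_rAct_ne {i j : Fin 4} (h : j ≠ i) (p : Z4) : co j (rAct i p) = co j p := by
  fin_cases i <;> fin_cases j <;> simp_all [co, rAct]

lemma rAct_rAct (i : Fin 4) (p : Z4) : rAct i (rAct i p) = p := by
  fin_cases i <;> simp [rAct, Prod.ext_iff] <;> omega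

lemma sum_co_rAct (i : Fin 4) (p : Z4) :
    co 0 (rAct i p) + co 1 (rAct i p) + co 2 (rAct i p) + co 3 (rAct i p)
      = co 0 p + co 1 p + co 2 p + co 3 p - mco i p := by
  fin_cases i <;> simp [co, rAct, mco] <;> ring

lemma co_negZ (j : Fin 4) (p : Z4) : co j (negZ p) = -co j p := by
  fin_cases j <;> simp [co, negZ]

lemma z4_ext {p q : Z4} (h : ∀ j, co j p = co j q) : p = q := by
  have h0 := h 0; have h1 := h 1; have h2 := h 2; have h3 := h 3
  simp [co] at h0 h1 h2 h3
  simp [Prod.ext_iff, h0, h1, h2, h3]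

lemma MZ (i : Fin 4) (p : Z4) : mco i p * BZ (eV i) (eV i) = 2 * BZ (eV i) p := by
  fin_cases i <;> (simp [mco, BZ, eV]; ring)

lemma BZii_pos (i : Fin 4) : 0 < BZ (eV i) (eV i) := by fin_cases i <;> decide
lemma sref_apply {α : V} (h : α ≠ 0) (β : V) :
    sref α β = β - (2 / ⟪α, α⟫ * ⟪α, β⟫) • α := by
  rw [sref, dif_neg h, Module.reflection_apply]
  simp

lemma sref_sref (α β : V) : sref α (sref α β) = β := by
  by_cases h : α = 0
  · simp [sref, h]
  · simp only [sref, dif_neg h]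
    exact Module.involutive_reflection _ _

lemma sref_isom (α x y : V) : ⟪sref α x, sref α y⟫ = ⟪x, y⟫ := by
  by_cases h : α = 0
  · simp [sref, h]
  · have hg : ⟪α, α⟫ ≠ 0 := inner_self_ne_zero.mpr h
    rw [sref_apply h, sref_apply h]
    simp only [inner_sub_left, inner_sub_right, real_inner_smul_left, real_inner_smul_right]
    rw [real_inner_comm x α, real_inner_comm y α]
    field_simp
    ring

section Ctx

variable {Φ : Set V} {αs : Fin 4 → V} {Pos : Set V}

/-- the vector with coordinates `p` in the simple basis -/
def vecOf (αs : Fin 4 → V) (p : Z4) : V :=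
  (p.1 : ℝ) • αs 0 + (p.2.1 : ℝ) • αs 1 + (p.2.2.1 : ℝ) • αs 2 + (p.2.2.2 : ℝ) • αs 3

lemma alphas_ne (hΦ : IsRootSystem Φ) (hbase : IsBase Φ αs Pos) (i : Fin 4) : αs i ≠ 0 :=
  fun h => hΦ.nonzero (h ▸ hbase.mem i)

lemma gram10 (hΦ : IsRootSystem Φ) (hbase : IsBase Φ αs Pos) (hF : CartanIs αs cartanF) :
    ⟪αs 2, αs 2⟫ = ⟪αs 3, αs 3⟫ ∧ ⟪αs 1, αs 1⟫ = 2 * ⟪αs 3, αs 3⟫ ∧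
    ⟪αs 0, αs 0⟫ = 2 * ⟪αs 3, αs 3⟫ ∧ ⟪αs 0, αs 1⟫ = -⟪αs 3, αs 3⟫ ∧
    ⟪αs 1, αs 2⟫ = -⟪αs 3, αs 3⟫ ∧ 2 * ⟪αs 2, αs 3⟫ = -⟪αs 3, αs 3⟫ ∧
    ⟪αs 0, αs 2⟫ = 0 ∧ ⟪αs 0, αs 3⟫ = 0 ∧ ⟪αs 1, αs 3⟫ = 0 := by
  have hg : ∀ k, ⟪αs k, αs k⟫ ≠ 0 := fun k => inner_self_ne_zero.mpr (alphas_ne hΦ hbase k)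
  have fv0 : ((0 : Fin 4) : ℕ) = 0 := rfl
  have fv1 : ((1 : Fin 4) : ℕ) = 1 := rfl
  have fv2 : ((2 : Fin 4) : ℕ) = 2 := rfl
  have fv3 : ((3 : Fin 4) : ℕ) = 3 := rfl
  have key : ∀ i j : Fin 4, 2 * ⟪αs i, αs j⟫ = cartanF ((i:ℕ)+1) ((j:ℕ)+1) * ⟪αs j, αs j⟫ := by
    intro i j
    rw [← hF i j]
    rw [div_mul_cancel₀ _ (hg j)]
  have h23 := key 2 3
  have h32 := key 3 2
  have h12 := key 1 2
  have h21 := key 2 1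
  have h01 := key 0 1
  have h10 := key 1 0
  have h02 := key 0 2
  have h03 := key 0 3
  have h13 := key 1 3
  norm_num [cartanF, fv0, fv1, fv2, fv3] at h23 h32 h12 h21 h01 h10 h02 h03 h13
  simp only [← real_inner_self_eq_norm_sq] at h23 h32 h12 h21 h01 h10
  have s23 : ⟪αs 3, αs 2⟫ = ⟪αs 2, αs 3⟫ := real_inner_comm _ _
  have s12 : ⟪αs 2, αs 1⟫ = ⟪αs 1, αs 2⟫ := real_inner_comm _ _
  have s01 : ⟪αs 1, αs 0⟫ = ⟪αs 0, αs 1⟫ := real_inner_comm _ _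
  refine ⟨by linarith, by linarith, by linarith, by linarith, by linarith, by linarith,
    by linarith, by linarith, by linarith⟩

lemma inner_vecOf (hΦ : IsRootSystem Φ) (hbase : IsBase Φ αs Pos) (hF : CartanIs αs cartanF)
    (p q : Z4) :
    2 * ⟪vecOf αs p, vecOf αs q⟫ = (BZ p q : ℝ) * ⟪αs 3, αs 3⟫ := by
  obtain ⟨g22, g11, g00, g01, g12, g23, g02, g03, g13⟩ := gram10 hΦ hbase hF
  have s10 : ⟪αs 1, αs 0⟫ = ⟪αs 0, αs 1⟫ := real_inner_comm _ _
  have s21 : ⟪αs 2, αs 1⟫ = ⟪αs 1, αs 2⟫ := real_inner_comm _ _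
  have s32 : ⟪αs 3, αs 2⟫ = ⟪αs 2, αs 3⟫ := real_inner_comm _ _
  have s20 : ⟪αs 2, αs 0⟫ = ⟪αs 0, αs 2⟫ := real_inner_comm _ _
  have s30 : ⟪αs 3, αs 0⟫ = ⟪αs 0, αs 3⟫ := real_inner_comm _ _
  have s31 : ⟪αs 3, αs 1⟫ = ⟪αs 1, αs 3⟫ := real_inner_comm _ _
  simp only [vecOf, inner_add_left, inner_add_right, real_inner_smul_left, real_inner_smul_right]
  rw [s10, s21, s32, s20, s30, s31]
  have g23' : ⟪αs 2, αs 3⟫ = -⟪αs 3, αs 3⟫/2 := by linarith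
  rw [g01, g12, g02, g03, g13, g22, g11, g00, g23']
  simp only [BZ]
  push_cast
  ring

end Ctx
section Ctx2

variable {Φ : Set V} {αs : Fin 4 → V} {Pos : Set V}

lemma cc_pos (hΦ : IsRootSystem Φ) (hbase : IsBase Φ αs Pos) : (0:ℝ) < ⟪αs 3, αs 3⟫ :=
  lt_of_le_of_ne real_inner_self_nonneg
    (Ne.symm (inner_self_ne_zero.mpr (alphas_ne hΦ hbase 3)))

lemma alpha_eq_vecOf (αs : Fin 4 → V) (i : Fin 4) : αs i = vecOf αs (eV i) := by
  fin_cases i <;> simp [vecOf, eV]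

lemma vecOf_inj (hbase : IsBase Φ αs Pos) {p q : Z4} (h : vecOf αs p = vecOf αs q) : p = q := by
  obtain ⟨p1, p2, p3, p4⟩ := p
  obtain ⟨q1, q2, q3, q4⟩ := q
  have hli := Fintype.linearIndependent_iff.mp hbase.indep
  have hz : ∑ i : Fin 4,
      (![((p1 - q1 : ℤ) : ℝ), ((p2 - q2 : ℤ) : ℝ), ((p3 - q3 : ℤ) : ℝ), ((p4 - q4 : ℤ) : ℝ)] i)
        • αs i = 0 := by
    rw [Fin.sum_univ_four]
    simp only [Matrix.cons_val_zero, Matrix.cons_val_one, Matrix.head_cons,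
      Matrix.cons_val_two, Matrix.tail_cons, Matrix.cons_val_three]
    unfold vecOf at h
    simp only at h
    push_cast
    rw [sub_smul, sub_smul, sub_smul, sub_smul]
    rw [show ((p1:ℝ) • αs 0 - (q1:ℝ) • αs 0) + ((p2:ℝ) • αs 1 - (q2:ℝ) • αs 1)
        + ((p3:ℝ) • αs 2 - (q3:ℝ) • αs 2) + ((p4:ℝ) • αs 3 - (q4:ℝ) • αs 3)
      = ((p1:ℝ) • αs 0 + (p2:ℝ) • αs 1 + (p3:ℝ) • αs 2 + (p4:ℝ) • αs 3)
        - ((q1:ℝ) • αs 0 + (q2:ℝ) • αs 1 + (q3:ℝ) • αs 2 + (q4:ℝ) • αs 3) by abel]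
    rw [h, sub_self]
  have e0 := hli _ hz 0
  have e1 := hli _ hz 1
  have e2 := hli _ hz 2
  have e3 := hli _ hz 3
  simp only [Matrix.cons_val_zero, Matrix.cons_val_one, Matrix.head_cons,
    Matrix.cons_val_two, Matrix.tail_cons, Matrix.cons_val_three, Int.cast_eq_zero,
    sub_eq_zero] at e0 e1 e2 e3
  simp [Prod.ext_iff, e0, e1, e2, e3]

lemma vecOf_negZ (αs : Fin 4 → V) (p : Z4) : vecOf αs (negZ p) = -vecOf αs p := by
  simp only [vecOf, negZ]
  push_cast
  module

lemma sref_vecOf (hΦ : IsRootSystem Φ) (hbase : IsBase Φ αs Pos) (hF : CartanIs αs cartanF)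
    (i : Fin 4) (p : Z4) :
    sref (αs i) (vecOf αs p) = vecOf αs (rAct i p) := by
  have hne := alphas_ne hΦ hbase i
  have hcc := (cc_pos hΦ hbase).ne'
  rw [sref_apply hne]
  have hip := inner_vecOf hΦ hbase hF (eV i) p
  rw [← alpha_eq_vecOf] at hip
  have hgi := inner_vecOf hΦ hbase hF (eV i) (eV i)
  rw [← alpha_eq_vecOf] at hgi
  have ht : 2 / ⟪αs i, αs i⟫ * ⟪αs i, vecOf αs p⟫ = ((mco i p : ℤ) : ℝ) := by
    have h2 : ⟪αs i, vecOf αs p⟫ = (BZ (eV i) p : ℝ) * ⟪αs 3, αs 3⟫ / 2 := by linarith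
    have h3 : ⟪αs i, αs i⟫ = (BZ (eV i) (eV i) : ℝ) * ⟪αs 3, αs 3⟫ / 2 := by linarith
    have hBne : (0:ℝ) < ((BZ (eV i) (eV i) : ℤ) : ℝ) := by
      fin_cases i <;> norm_num [BZ, eV]
    rw [h2, h3]
    field_simp
    fin_cases i <;> (simp only [BZ, eV, mco]; push_cast; ring)
  rw [ht]
  fin_cases i <;> (simp only [vecOf, rAct, mco, eV]; push_cast; module)

lemma pos_coords (hbase : IsBase Φ αs Pos) {β : V} (hβ : β ∈ Pos) :
    ∃ p : Z4, (0 ≤ co 0 p ∧ 0 ≤ co 1 p ∧ 0 ≤ co 2 p ∧ 0 ≤ co 3 p) ∧ β = vecOf αs p := by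
  obtain ⟨c, hc⟩ := (hbase.mem_pos_iff β (hbase.pos_subset hβ)).mp hβ
  rw [Fin.sum_univ_four] at hc
  refine ⟨((c 0 : ℤ), (c 1 : ℤ), (c 2 : ℤ), (c 3 : ℤ)),
    ⟨by simp [co], by simp [co], by simp [co], by simp [co]⟩, ?_⟩
  rw [hc]
  simp only [vecOf]
  push_cast
  rfl

lemma mem_pos_of (hbase : IsBase Φ αs Pos) {β : V} {p : Z4} (hβΦ : β ∈ Φ)
    (h : β = vecOf αs p) (h0 : 0 ≤ co 0 p) (h1 : 0 ≤ co 1 p) (h2 : 0 ≤ co 2 p)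
    (h3 : 0 ≤ co 3 p) : β ∈ Pos := by
  refine (hbase.mem_pos_iff β hβΦ).mpr
    ⟨![(co 0 p).toNat, (co 1 p).toNat, (co 2 p).toNat, (co 3 p).toNat], ?_⟩
  rw [Fin.sum_univ_four, h]
  simp only [Matrix.cons_val_zero, Matrix.cons_val_one, Matrix.head_cons,
    Matrix.cons_val_two, Matrix.tail_cons, Matrix.cons_val_three, vecOf]
  have t0 : (((co 0 p).toNat : ℕ) : ℝ) = ((co 0 p : ℤ) : ℝ) := by
    exact_mod_cast congrArg (fun z : ℤ => (z : ℝ)) (Int.toNat_of_nonneg h0)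
  have t1 : (((co 1 p).toNat : ℕ) : ℝ) = ((co 1 p : ℤ) : ℝ) := by
    exact_mod_cast congrArg (fun z : ℤ => (z : ℝ)) (Int.toNat_of_nonneg h1)
  have t2 : (((co 2 p).toNat : ℕ) : ℝ) = ((co 2 p : ℤ) : ℝ) := by
    exact_mod_cast congrArg (fun z : ℤ => (z : ℝ)) (Int.toNat_of_nonneg h2)
  have t3 : (((co 3 p).toNat : ℕ) : ℝ) = ((co 3 p : ℤ) : ℝ) := by
    exact_mod_cast congrArg (fun z : ℤ => (z : ℝ)) (Int.toNat_of_nonneg h3)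
  rw [t0, t1, t2, t3]
  simp [co]

/-- product of simple reflections along a word -/
noncomputable def wrd (αs : Fin 4 → V) (l : List (Fin 4)) : V ≃ₗ[ℝ] V :=
  (l.map fun i => sref (αs i)).prod

lemma wrd_cons (αs : Fin 4 → V) (i : Fin 4) (l : List (Fin 4)) :
    wrd αs (i :: l) = sref (αs i) * wrd αs l := by
  simp [wrd]

lemma sref_mem_weyl (hbase : IsBase Φ αs Pos) (i : Fin 4) : sref (αs i) ∈ weylGroup Φ :=
  Subgroup.subset_closure ⟨αs i, hbase.mem i, rfl⟩

lemma wrd_mem_weyl (hbase : IsBase Φ αs Pos) (l : List (Fin 4)) :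
    wrd αs l ∈ weylGroup Φ := by
  induction l with
  | nil => exact one_mem _
  | cons i l ih => rw [wrd_cons]; exact mul_mem (sref_mem_weyl hbase i) ih

lemma sref_mem_parab {i : Fin 4} (hi : i ≠ 0) :
    sref (αs i) ∈ parab αs {j | j ≠ 0} :=
  Subgroup.subset_closure ⟨i, hi, rfl⟩

lemma wrd_mem_parab {l : List (Fin 4)} (h : ∀ i ∈ l, i ≠ (0 : Fin 4)) :
    wrd αs l ∈ parab αs {j | j ≠ 0} := by
  induction l with
  | nil => exact one_mem _
  | cons i l ih =>
    rw [wrd_cons]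
    exact mul_mem (sref_mem_parab (h i List.mem_cons_self))
      (ih fun j hj => h j (List.mem_cons_of_mem i hj))

lemma wrd_apply (hΦ : IsRootSystem Φ) (hbase : IsBase Φ αs Pos) (hF : CartanIs αs cartanF)
    (l : List (Fin 4)) (p : Z4) :
    wrd αs l (vecOf αs p) = vecOf αs (mact l p) := by
  induction l with
  | nil => rfl
  | cons i l ih =>
    rw [wrd_cons]
    show sref (αs i) (wrd αs l (vecOf αs p)) = _
    rw [ih, sref_vecOf hΦ hbase hF]
    rfl

lemma weyl_isom (hΦ : IsRootSystem Φ) {w : V ≃ₗ[ℝ] V} (hw : w ∈ weylGroup Φ) :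
    ∀ x y : V, ⟪w x, w y⟫ = ⟪x, y⟫ := by
  induction hw using Subgroup.closure_induction with
  | mem g hg =>
    obtain ⟨α, -, rfl⟩ := hg
    exact sref_isom α
  | one => intro x y; rfl
  | mul a b _ _ pa pb =>
    intro x y
    show ⟪a (b x), a (b y)⟫ = _
    rw [pa, pb]
  | inv a _ pa =>
    intro x y
    show ⟪a.symm x, a.symm y⟫ = ⟪x, y⟫
    conv_rhs => rw [← a.apply_symm_apply x, ← a.apply_symm_apply y]
    rw [pa]

lemma weyl_image (hΦ : IsRootSystem Φ) {w : V ≃ₗ[ℝ] V} (hw : w ∈ weylGroup Φ) :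
    w '' Φ = Φ := by
  induction hw using Subgroup.closure_induction with
  | mem g hg =>
    obtain ⟨α, hα, rfl⟩ := hg
    apply Set.eq_of_subset_of_ncard_le
    · rintro β ⟨γ, hγ, rfl⟩
      exact hΦ.refl_mem α hα γ hγ
    · rw [Set.ncard_image_of_injective _ (sref α).injective]
    · exact hΦ.finite
  | one => simp
  | mul a b _ _ pa pb =>
    show (fun x => a (b x)) '' Φ = Φ
    rw [← Function.comp_def, Set.image_comp, pb, pa]
  | inv a _ pa =>
    conv_lhs => rw [← pa]
    rw [← Set.image_comp]
    simp only [Function.comp_def]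
    show (fun x => a.symm (a x)) '' Φ = Φ
    simp [a.symm_apply_apply]

lemma weyl_mem (hΦ : IsRootSystem Φ) {w : V ≃ₗ[ℝ] V} (hw : w ∈ weylGroup Φ) {β : V}
    (hβ : β ∈ Φ) : w β ∈ Φ := by
  rw [← weyl_image hΦ hw]
  exact ⟨β, hβ, rfl⟩

lemma parab_le_weyl (hbase : IsBase Φ αs Pos) : parab αs {j | j ≠ 0} ≤ weylGroup Φ := by
  rw [parab, Subgroup.closure_le]
  rintro g ⟨i, -, rfl⟩
  exact sref_mem_weyl hbase i

lemma parab_fix (hΦ : IsRootSystem Φ) (hbase : IsBase Φ αs Pos) (hF : CartanIs αs cartanF)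
    {w : V ≃ₗ[ℝ] V} (hw : w ∈ parab αs {j | j ≠ 0}) :
    w (vecOf αs phiv) = vecOf αs phiv := by
  induction hw using Subgroup.closure_induction with
  | mem g hg =>
    obtain ⟨i, hi, rfl⟩ := hg
    rw [sref_vecOf hΦ hbase hF, F6 i hi]
  | one => rfl
  | mul a b _ _ pa pb =>
    show a (b _) = _
    rw [pb, pa]
  | inv a _ pa =>
    conv_lhs => rw [← pa]
    exact a.symm_apply_apply _

end Ctx2
section Ctx3

variable {Φ : Set V} {αs : Fin 4 → V} {Pos : Set V}

lemma BZ_eq_of_inner (hΦ : IsRootSystem Φ) (hbase : IsBase Φ αs Pos) (hF : CartanIs αs cartanF)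
    {p q p' q' : Z4} (h : ⟪vecOf αs p, vecOf αs q⟫ = ⟪vecOf αs p', vecOf αs q'⟫) :
    BZ p q = BZ p' q' := by
  have h1 := inner_vecOf hΦ hbase hF p q
  have h2 := inner_vecOf hΦ hbase hF p' q'
  have hcc := cc_pos hΦ hbase
  have h3 : ((BZ p q : ℤ) : ℝ) * ⟪αs 3, αs 3⟫ = ((BZ p' q' : ℤ) : ℝ) * ⟪αs 3, αs 3⟫ := by
    rw [← h1, ← h2, h]
  exact_mod_cast mul_right_cancel₀ hcc.ne' h3

lemma BZ_zero_of_inner (hΦ : IsRootSystem Φ) (hbase : IsBase Φ αs Pos) (hF : CartanIs αs cartanF)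
    {p q : Z4} (h : ⟪vecOf αs p, vecOf αs q⟫ = 0) : BZ p q = 0 := by
  have h1 := inner_vecOf hΦ hbase hF p q
  have hcc := cc_pos hΦ hbase
  rw [h, mul_zero] at h1
  have : ((BZ p q : ℤ) : ℝ) = 0 := by
    rcases mul_eq_zero.mp h1.symm with h' | h'
    · exact h'
    · exact absurd h' hcc.ne'
  exact_mod_cast this

lemma root_coords_aux (hΦ : IsRootSystem Φ) (hbase : IsBase Φ αs Pos)
    (hF : CartanIs αs cartanF) :
    ∀ n : ℕ, ∀ β ∈ Pos, ∀ p : Z4,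
      (0 ≤ co 0 p ∧ 0 ≤ co 1 p ∧ 0 ≤ co 2 p ∧ 0 ≤ co 3 p) → β = vecOf αs p →
      (co 0 p + co 1 p + co 2 p + co 3 p = (n : ℤ)) → p ∈ RposL := by
  intro n
  induction n using Nat.strong_induction_on with
  | _ n IH =>
  rintro β hβ p ⟨h0, h1, h2, h3⟩ hveq hsum
  have hβΦ : β ∈ Φ := hbase.pos_subset hβ
  have hβne : β ≠ 0 := fun h => hΦ.nonzero (h ▸ hβΦ)
  have hco : ∀ k : Fin 4, 0 ≤ co k p := by
    intro k; fin_cases k <;> assumption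
  by_cases hss : ∃ j : Fin 4, ∀ k : Fin 4, k ≠ j → co k p = 0
  · -- β is a multiple of a simple root
    obtain ⟨j, hj⟩ := hss
    obtain ⟨p1, p2, p3, p4⟩ := p
    have g0 : 0 ≤ p1 := h0
    have g1 : 0 ≤ p2 := h1
    have g2 : 0 ≤ p3 := h2
    have g3 : 0 ≤ p4 := h3
    clear h0 h1 h2 h3 hco hsum
    fin_cases j
    · have z1 : p2 = 0 := hj 1 (by decide)
      have z2 : p3 = 0 := hj 2 (by decide)
      have z3 : p4 = 0 := hj 3 (by decide)
      subst z1; subst z2; subst z3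
      have hβj : β = ((p1 : ℤ) : ℝ) • αs 0 := by
        rw [hveq]
        show (p1:ℝ) • αs 0 + ((0:ℤ):ℝ) • αs 1 + ((0:ℤ):ℝ) • αs 2 + ((0:ℤ):ℝ) • αs 3
          = ((p1 : ℤ) : ℝ) • αs 0
        simp
      have hmem : ((p1 : ℤ) : ℝ) • αs 0 ∈ Φ := hβj ▸ hβΦ
      rcases hΦ.reduced (αs 0) (hbase.mem 0) _ hmem with h | h
      · have hc : p1 = 1 := by exact_mod_cast h
        subst hc; decide
      · have hc : p1 = -1 := by exact_mod_cast h
        omega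
    · have z1 : p1 = 0 := hj 0 (by decide)
      have z2 : p3 = 0 := hj 2 (by decide)
      have z3 : p4 = 0 := hj 3 (by decide)
      subst z1; subst z2; subst z3
      have hβj : β = ((p2 : ℤ) : ℝ) • αs 1 := by
        rw [hveq]
        show ((0:ℤ):ℝ) • αs 0 + (p2:ℝ) • αs 1 + ((0:ℤ):ℝ) • αs 2 + ((0:ℤ):ℝ) • αs 3
          = ((p2 : ℤ) : ℝ) • αs 1
        simp
      have hmem : ((p2 : ℤ) : ℝ) • αs 1 ∈ Φ := hβj ▸ hβΦ
      rcases hΦ.reduced (αs 1) (hbase.mem 1) _ hmem with h | h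
      · have hc : p2 = 1 := by exact_mod_cast h
        subst hc; decide
      · have hc : p2 = -1 := by exact_mod_cast h
        omega
    · have z1 : p1 = 0 := hj 0 (by decide)
      have z2 : p2 = 0 := hj 1 (by decide)
      have z3 : p4 = 0 := hj 3 (by decide)
      subst z1; subst z2; subst z3
      have hβj : β = ((p3 : ℤ) : ℝ) • αs 2 := by
        rw [hveq]
        show ((0:ℤ):ℝ) • αs 0 + ((0:ℤ):ℝ) • αs 1 + (p3:ℝ) • αs 2 + ((0:ℤ):ℝ) • αs 3
          = ((p3 : ℤ) : ℝ) • αs 2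
        simp
      have hmem : ((p3 : ℤ) : ℝ) • αs 2 ∈ Φ := hβj ▸ hβΦ
      rcases hΦ.reduced (αs 2) (hbase.mem 2) _ hmem with h | h
      · have hc : p3 = 1 := by exact_mod_cast h
        subst hc; decide
      · have hc : p3 = -1 := by exact_mod_cast h
        omega
    · have z1 : p1 = 0 := hj 0 (by decide)
      have z2 : p2 = 0 := hj 1 (by decide)
      have z3 : p3 = 0 := hj 2 (by decide)
      subst z1; subst z2; subst z3
      have hβj : β = ((p4 : ℤ) : ℝ) • αs 3 := by
        rw [hveq]
        show ((0:ℤ):ℝ) • αs 0 + ((0:ℤ):ℝ) • αs 1 + ((0:ℤ):ℝ) • αs 2 + (p4:ℝ) • αs 3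
          = ((p4 : ℤ) : ℝ) • αs 3
        simp
      have hmem : ((p4 : ℤ) : ℝ) • αs 3 ∈ Φ := hβj ▸ hβΦ
      rcases hΦ.reduced (αs 3) (hbase.mem 3) _ hmem with h | h
      · have hc : p4 = 1 := by exact_mod_cast h
        subst hc; decide
      · have hc : p4 = -1 := by exact_mod_cast h
        omega
  · -- general case: reflect down
    push_neg at hss
    have hBB : 0 < ⟪β, β⟫ :=
      lt_of_le_of_ne real_inner_self_nonneg (Ne.symm (inner_self_ne_zero.mpr hβne))
    have hBB2 : 0 < ⟪vecOf αs p, β⟫ := by rw [← hveq]; exact hBB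
    have hexp : ⟪vecOf αs p, β⟫ = ((co 0 p : ℤ) : ℝ) * ⟪αs 0, β⟫ + ((co 1 p : ℤ) : ℝ) * ⟪αs 1, β⟫
        + ((co 2 p : ℤ) : ℝ) * ⟪αs 2, β⟫ + ((co 3 p : ℤ) : ℝ) * ⟪αs 3, β⟫ := by
      simp only [vecOf, inner_add_left, real_inner_smul_left]
      rfl
    have hex : ∃ i : Fin 4, 0 < ((co i p : ℤ) : ℝ) * ⟪αs i, β⟫ := by
      by_contra hc
      push_neg at hc
      have c0 := hc 0; have c1 := hc 1; have c2 := hc 2; have c3 := hc 3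
      linarith
    obtain ⟨i, hi⟩ := hex
    have hipos : 0 < ⟪αs i, β⟫ := by
      rcases lt_or_ge 0 ⟪αs i, β⟫ with h | h
      · exact h
      · have hcast : (0:ℝ) ≤ ((co i p : ℤ) : ℝ) := by exact_mod_cast hco i
        nlinarith
    -- the reflection coefficient is a positive integer
    have hipB := inner_vecOf hΦ hbase hF (eV i) p
    rw [← alpha_eq_vecOf, ← hveq] at hipB
    have hcc := cc_pos hΦ hbase
    have hBp : 0 < BZ (eV i) p := by
      by_contra hle
      push_neg at hle
      have : ((BZ (eV i) p : ℤ) : ℝ) ≤ 0 := by exact_mod_cast hle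
      nlinarith
    have hm1 : 1 ≤ mco i p := by
      have := MZ i p
      have := BZii_pos i
      nlinarith
    -- the reflected root
    set β' := sref (αs i) β with hβ'def
    have hβ'Φ : β' ∈ Φ := hΦ.refl_mem (αs i) (hbase.mem i) β hβΦ
    have hβ'v : β' = vecOf αs (rAct i p) := by
      rw [hβ'def, hveq, sref_vecOf hΦ hbase hF]
    obtain ⟨k, hki, hk0⟩ := hss i
    have hkpos : 0 < co k p := lt_of_le_of_ne (hco k) (Ne.symm hk0)
    have hβ'pos : β' ∈ Pos := by
      rcases hbase.pos_or_neg β' hβ'Φ with h | h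
      · exact h
      · exfalso
        obtain ⟨q, hq, hqv⟩ := pos_coords hbase h
        have : vecOf αs (rAct i p) = vecOf αs (negZ q) := by
          rw [vecOf_negZ, ← hqv, neg_neg, ← hβ'v]
        have heq := vecOf_inj hbase this
        have e1 : co k (rAct i p) = co k p := co_rAct_ne hki p
        have e2 : co k (negZ q) = -co k q := co_negZ k q
        have hqk : 0 ≤ co k q := by
          obtain ⟨q0, q1, q2, q3⟩ := hq
          fin_cases k <;> assumption
        rw [heq, e2] at e1
        omega
    obtain ⟨q', hq', hq'v⟩ := pos_coords hbase hβ'pos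
    have heq' : rAct i p = q' := vecOf_inj hbase (hβ'v.symm.trans hq'v)
    have hsum' := sum_co_rAct i p
    have hq'nonneg : 0 ≤ co 0 (rAct i p) ∧ 0 ≤ co 1 (rAct i p) ∧ 0 ≤ co 2 (rAct i p)
        ∧ 0 ≤ co 3 (rAct i p) := by rw [heq']; exact hq'
    have hS : co 0 (rAct i p) + co 1 (rAct i p) + co 2 (rAct i p) + co 3 (rAct i p)
        = (n : ℤ) - mco i p := by rw [hsum', hsum]
    have hmle : mco i p ≤ (n : ℤ) := by
      obtain ⟨a0, a1, a2, a3⟩ := hq'nonneg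
      omega
    have hlt : ((n : ℤ) - mco i p).toNat < n := by omega
    have hmem' : rAct i p ∈ RposL := by
      refine IH _ hlt β' hβ'pos (rAct i p) hq'nonneg hβ'v ?_
      rw [hS]
      omega
    have hpall : p ∈ RallL := by
      have := F1 (rAct i p) (F3b _ hmem') i
      rwa [rAct_rAct] at this
    exact F3 p hpall h0 h1 h2 h3

lemma root_coords (hΦ : IsRootSystem Φ) (hbase : IsBase Φ αs Pos) (hF : CartanIs αs cartanF)
    {β : V} (hβ : β ∈ Φ) : ∃ p ∈ RallL, β = vecOf αs p := by
  rcases hbase.pos_or_neg β hβ with h | h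
  · obtain ⟨p, hp, hv⟩ := pos_coords hbase h
    have hs : 0 ≤ co 0 p + co 1 p + co 2 p + co 3 p := by
      obtain ⟨a0, a1, a2, a3⟩ := hp; omega
    have := root_coords_aux hΦ hbase hF (co 0 p + co 1 p + co 2 p + co 3 p).toNat β h p hp hv
      (by rw [Int.toNat_of_nonneg hs])
    exact ⟨p, F3b p this, hv⟩
  · obtain ⟨p, hp, hv⟩ := pos_coords hbase h
    have hs : 0 ≤ co 0 p + co 1 p + co 2 p + co 3 p := by
      obtain ⟨a0, a1, a2, a3⟩ := hp; omega
    have hmem := root_coords_aux hΦ hbase hF (co 0 p + co 1 p + co 2 p + co 3 p).toNat (-β) h p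
      hp hv (by rw [Int.toNat_of_nonneg hs])
    refine ⟨negZ p, F2 p (F3b p hmem), ?_⟩
    rw [vecOf_negZ, ← hv, neg_neg]

end Ctx3
section Ctx4

variable {Φ : Set V} {αs : Fin 4 → V} {Pos : Set V}

lemma inv_apply_of {u : V ≃ₗ[ℝ] V} {x y : V} (h : u x = y) : (u⁻¹ : V ≃ₗ[ℝ] V) y = x := by
  subst h; exact u.symm_apply_apply x

lemma long_coords (hΦ : IsRootSystem Φ) (hbase : IsBase Φ αs Pos) (hF : CartanIs αs cartanF)
    {a : V} (ha : a ∈ Φ) (hla : ⟪a, a⟫ = ⟪vecOf αs phiv, vecOf αs phiv⟫) :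
    ∃ p ∈ RallL, a = vecOf αs p ∧ BZ p p = 4 := by
  obtain ⟨p, hp, hv⟩ := root_coords hΦ hbase hF ha
  refine ⟨p, hp, hv, ?_⟩
  have := BZ_eq_of_inner hΦ hbase hF (p := p) (q := p) (p' := phiv) (q' := phiv)
    (by rw [← hv]; exact hla)
  rw [this]
  decide

lemma part3_lemma (hΦ : IsRootSystem Φ) (hbase : IsBase Φ αs Pos) (hF : CartanIs αs cartanF)
    {a : V} (ha : a ∈ Φ) (hla : ⟪a, a⟫ = ⟪vecOf αs phiv, vecOf αs phiv⟫)
    (hoa : ⟪a, vecOf αs phiv⟫ = 0) :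
    ∃ w : V ≃ₗ[ℝ] V, w ∈ parab αs {j | j ≠ 0} ∧ w a = vecOf αs b0v := by
  obtain ⟨p, hp, hv, hBp⟩ := long_coords hΦ hbase hF ha hla
  have horth : BZ p phiv = 0 := BZ_zero_of_inner hΦ hbase hF (by rw [← hv]; exact hoa)
  obtain ⟨hact, hlet⟩ := F5 p hp hBp horth
  refine ⟨wrd αs (wfx p), wrd_mem_parab hlet, ?_⟩
  rw [hv, wrd_apply hΦ hbase hF, hact]

lemma pair_to_std (hΦ : IsRootSystem Φ) (hbase : IsBase Φ αs Pos) (hF : CartanIs αs cartanF)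
    {a b : V} (ha : a ∈ Φ) (hb : b ∈ Φ)
    (hla : ⟪a, a⟫ = ⟪vecOf αs phiv, vecOf αs phiv⟫)
    (hlb : ⟪b, b⟫ = ⟪vecOf αs phiv, vecOf αs phiv⟫)
    (hab : ⟪a, b⟫ = 0) :
    ∃ w : V ≃ₗ[ℝ] V, w ∈ weylGroup Φ ∧ w a = vecOf αs phiv ∧ w b = vecOf αs b0v := by
  obtain ⟨p, hp, hav, hBp⟩ := long_coords hΦ hbase hF ha hla
  have hu : wrd αs (wtp p) a = vecOf αs phiv := by
    rw [hav, wrd_apply hΦ hbase hF, F4 p hp hBp]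
  set u := wrd αs (wtp p) with hu_def
  have huW : u ∈ weylGroup Φ := wrd_mem_weyl hbase _
  set b1 := u b with hb1_def
  have hb1Φ : b1 ∈ Φ := weyl_mem hΦ huW hb
  have hlb1 : ⟪b1, b1⟫ = ⟪vecOf αs phiv, vecOf αs phiv⟫ := by
    rw [hb1_def, weyl_isom hΦ huW, hlb]
  have hob1 : ⟪b1, vecOf αs phiv⟫ = 0 := by
    rw [← hu, hb1_def, weyl_isom hΦ huW, real_inner_comm, hab]
  obtain ⟨v, hvP, hvb⟩ := part3_lemma hΦ hbase hF hb1Φ hlb1 hob1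
  refine ⟨v * u, mul_mem (parab_le_weyl hbase hvP) huW, ?_, ?_⟩
  · show v (u a) = _
    rw [hu]
    exact parab_fix hΦ hbase hF hvP
  · show v (u b) = _
    rw [← hb1_def, hvb]

end Ctx4
section Ctx5

variable {Φ : Set V} {αs : Fin 4 → V} {Pos : Set V}

/-- inversion-type set -/
def NSet (Pos : Set V) (w : V ≃ₗ[ℝ] V) : Set V := {β | β ∈ Pos ∧ w β ∉ Pos}

lemma NSet_finite (hΦ : IsRootSystem Φ) (hbase : IsBase Φ αs Pos) (w : V ≃ₗ[ℝ] V) :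
    (NSet Pos w).Finite :=
  hΦ.finite.subset fun _ hx => hbase.pos_subset hx.1

lemma alpha_mem_pos (hΦ : IsRootSystem Φ) (hbase : IsBase Φ αs Pos) (i : Fin 4) :
    αs i ∈ Pos :=
  mem_pos_of hbase (hbase.mem i) (alpha_eq_vecOf αs i)
    (by fin_cases i <;> decide) (by fin_cases i <;> decide)
    (by fin_cases i <;> decide) (by fin_cases i <;> decide)

def zmulZ (m : ℤ) (p : Z4) : Z4 := (m * p.1, m * p.2.1, m * p.2.2.1, m * p.2.2.2)

lemma vecOf_zmulZ (αs : Fin 4 → V) (m : ℤ) (p : Z4) :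
    vecOf αs (zmulZ m p) = (m : ℝ) • vecOf αs p := by
  simp only [vecOf, zmulZ]
  push_cast
  module

lemma co_eV (k j : Fin 4) : co k (eV j) = if k = j then 1 else 0 := by
  fin_cases k <;> fin_cases j <;> decide

lemma single_support (hΦ : IsRootSystem Φ) (hbase : IsBase Φ αs Pos)
    {β : V} {p : Z4} (hβΦ : β ∈ Φ) (hveq : β = vecOf αs p) (j : Fin 4)
    (hz : ∀ k : Fin 4, k ≠ j → co k p = 0) (hnn : 0 ≤ co j p) :
    β = αs j := by
  have hp : p = zmulZ (co j p) (eV j) := by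
    apply z4_ext
    intro k
    by_cases hk : k = j
    · subst hk
      have : co k (zmulZ (co k p) (eV k)) = co k p * co k (eV k) := by
        fin_cases k <;> simp [co, zmulZ, eV]
      rw [this, co_eV]
      simp
    · have : co k (zmulZ (co j p) (eV j)) = co j p * co k (eV j) := by
        fin_cases k <;> simp [co, zmulZ, eV] <;> rfl
      rw [hz k hk, this, co_eV, if_neg hk, mul_zero]
  have hβval : β = ((co j p : ℤ) : ℝ) • αs j := by
    rw [hveq, show vecOf αs p = vecOf αs (zmulZ (co j p) (eV j)) from by rw [← hp],
      vecOf_zmulZ, ← alpha_eq_vecOf]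
  have hmem : ((co j p : ℤ) : ℝ) • αs j ∈ Φ := hβval ▸ hβΦ
  rcases hΦ.reduced (αs j) (hbase.mem j) _ hmem with h | h
  · have hc : co j p = 1 := by exact_mod_cast h
    rw [hβval, hc]
    simp
  · have hc : co j p = -1 := by exact_mod_cast h
    omega

lemma sref_alpha_self (hΦ : IsRootSystem Φ) (hbase : IsBase Φ αs Pos)
    (hF : CartanIs αs cartanF) (i : Fin 4) : sref (αs i) (αs i) = -αs i := by
  nth_rewrite 2 [alpha_eq_vecOf αs i]
  rw [sref_vecOf hΦ hbase hF, F8 i, vecOf_negZ, ← alpha_eq_vecOf]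

lemma simple_perm (hΦ : IsRootSystem Φ) (hbase : IsBase Φ αs Pos) (hF : CartanIs αs cartanF)
    (i : Fin 4) {β : V} (hβ : β ∈ Pos) (hne : β ≠ αs i) :
    sref (αs i) β ∈ Pos ∧ sref (αs i) β ≠ αs i := by
  obtain ⟨p, ⟨h0, h1, h2, h3⟩, hveq⟩ := pos_coords hbase hβ
  have hβΦ : β ∈ Φ := hbase.pos_subset hβ
  have hco : ∀ k : Fin 4, 0 ≤ co k p := by intro k; fin_cases k <;> assumption
  have hss : ∃ k : Fin 4, k ≠ i ∧ co k p ≠ 0 := by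
    by_contra hc
    push_neg at hc
    exact hne (single_support hΦ hbase hβΦ hveq i (fun k hk => hc k hk) (hco i))
  obtain ⟨k, hki, hk0⟩ := hss
  have hkpos : 0 < co k p := lt_of_le_of_ne (hco k) (Ne.symm hk0)
  have hsv : sref (αs i) β = vecOf αs (rAct i p) := by
    rw [hveq, sref_vecOf hΦ hbase hF]
  have hsΦ : sref (αs i) β ∈ Φ := hΦ.refl_mem (αs i) (hbase.mem i) β hβΦ
  constructor
  · rcases hbase.pos_or_neg _ hsΦ with h | h
    · exact h
    · exfalso
      obtain ⟨q, hq, hqv⟩ := pos_coords hbase h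
      have heq : rAct i p = negZ q := by
        apply vecOf_inj hbase
        rw [← hsv, vecOf_negZ, ← hqv, neg_neg]
      have e1 : co k (rAct i p) = co k p := co_rAct_ne hki p
      have hqk : 0 ≤ co k q := by
        obtain ⟨q0, q1, q2, q3⟩ := hq
        fin_cases k <;> assumption
      rw [heq, co_negZ] at e1
      omega
  · intro hcon
    have heq : rAct i p = eV i := by
      apply vecOf_inj hbase
      rw [← hsv, hcon, alpha_eq_vecOf αs i]
    have hpe : p = negZ (eV i) := by
      have := congrArg (rAct i) heq
      rw [rAct_rAct, F8 i] at this
      exact this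
    have : co k p = 0 := by
      rw [hpe, co_negZ, co_eV, if_neg hki, neg_zero]
    exact hk0 this

lemma NSet_mul_sref (hΦ : IsRootSystem Φ) (hbase : IsBase Φ αs Pos) (hF : CartanIs αs cartanF)
    {w : V ≃ₗ[ℝ] V} (hw : w ∈ weylGroup Φ) (i : Fin 4) (hneg : w (αs i) ∉ Pos) :
    NSet Pos (w * sref (αs i)) = (sref (αs i)) '' (NSet Pos w \ {αs i}) := by
  have hwa : -(w (αs i)) ∈ Pos := by
    rcases hbase.pos_or_neg _ (weyl_mem hΦ hw (hbase.mem i)) with h | h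
    · exact absurd h hneg
    · exact h
  ext β
  constructor
  · rintro ⟨hβ, hnβ⟩
    have hβne : β ≠ αs i := by
      rintro rfl
      apply hnβ
      show w (sref (αs i) (αs i)) ∈ Pos
      rw [sref_alpha_self hΦ hbase hF i, map_neg]
      exact hwa
    obtain ⟨hγP, hγne⟩ := simple_perm hΦ hbase hF i hβ hβne
    refine ⟨sref (αs i) β, ⟨⟨hγP, ?_⟩, hγne⟩, sref_sref _ _⟩
    rwa [show w (sref (αs i) β) = (w * sref (αs i)) β from rfl]
  · rintro ⟨γ, ⟨⟨hγP, hγn⟩, hγne⟩, rfl⟩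
    have hγnei : γ ≠ αs i := hγne
    refine ⟨(simple_perm hΦ hbase hF i hγP hγnei).1, ?_⟩
    show w (sref (αs i) (sref (αs i) γ)) ∉ Pos
    rwa [sref_sref]

lemma NSet_card_lt (hΦ : IsRootSystem Φ) (hbase : IsBase Φ αs Pos) (hF : CartanIs αs cartanF)
    {w : V ≃ₗ[ℝ] V} (hw : w ∈ weylGroup Φ) (i : Fin 4) (hneg : w (αs i) ∉ Pos) :
    (NSet Pos (w * sref (αs i))).ncard < (NSet Pos w).ncard := by
  have hmem : αs i ∈ NSet Pos w := ⟨alpha_mem_pos hΦ hbase i, hneg⟩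
  have hfin : (NSet Pos w).Finite := NSet_finite hΦ hbase w
  rw [NSet_mul_sref hΦ hbase hF hw i hneg,
    Set.ncard_image_of_injective _ (sref (αs i)).injective,
    Set.ncard_diff_singleton_of_mem hmem]
  have hpos : 0 < (NSet Pos w).ncard := Set.ncard_pos hfin |>.mpr ⟨αs i, hmem⟩
  omega

lemma phi_inner_alpha_nonneg (hΦ : IsRootSystem Φ) (hbase : IsBase Φ αs Pos)
    (hF : CartanIs αs cartanF) (k : Fin 4) : 0 ≤ ⟪vecOf αs phiv, αs k⟫ := by
  have h := inner_vecOf hΦ hbase hF phiv (eV k)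
  rw [← alpha_eq_vecOf] at h
  have hcc := cc_pos hΦ hbase
  have hB : (0:ℝ) ≤ ((BZ phiv (eV k) : ℤ) : ℝ) := by
    have : 0 ≤ BZ phiv (eV k) := by fin_cases k <;> decide
    exact_mod_cast this
  nlinarith

lemma phi_alpha0 (hΦ : IsRootSystem Φ) (hbase : IsBase Φ αs Pos)
    (hF : CartanIs αs cartanF) : ⟪vecOf αs phiv, αs 0⟫ = ⟪αs 3, αs 3⟫ := by
  have h := inner_vecOf hΦ hbase hF phiv (eV 0)
  rw [← alpha_eq_vecOf] at h
  have hB : BZ phiv (eV 0) = 2 := by decide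
  rw [hB] at h
  push_cast at h
  linarith

lemma phi_dom (hΦ : IsRootSystem Φ) (hbase : IsBase Φ αs Pos) (hF : CartanIs αs cartanF)
    {γ : V} (hγ : γ ∈ Pos) : 0 ≤ ⟪vecOf αs phiv, γ⟫ := by
  obtain ⟨q, ⟨h0, h1, h2, h3⟩, hveq⟩ := pos_coords hbase hγ
  have hexp : ⟪vecOf αs phiv, vecOf αs q⟫
      = ((co 0 q : ℤ) : ℝ) * ⟪vecOf αs phiv, αs 0⟫ + ((co 1 q : ℤ) : ℝ) * ⟪vecOf αs phiv, αs 1⟫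
      + ((co 2 q : ℤ) : ℝ) * ⟪vecOf αs phiv, αs 2⟫
      + ((co 3 q : ℤ) : ℝ) * ⟪vecOf αs phiv, αs 3⟫ := by
    conv_lhs => rw [show vecOf αs q = (q.1:ℝ) • αs 0 + (q.2.1:ℝ) • αs 1 + (q.2.2.1:ℝ) • αs 2
      + (q.2.2.2:ℝ) • αs 3 from rfl]
    simp only [inner_add_right, real_inner_smul_right]
    rfl
  rw [hveq, hexp]
  have c0 : (0:ℝ) ≤ ((co 0 q : ℤ) : ℝ) := by exact_mod_cast h0
  have c1 : (0:ℝ) ≤ ((co 1 q : ℤ) : ℝ) := by exact_mod_cast h1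
  have c2 : (0:ℝ) ≤ ((co 2 q : ℤ) : ℝ) := by exact_mod_cast h2
  have c3 : (0:ℝ) ≤ ((co 3 q : ℤ) : ℝ) := by exact_mod_cast h3
  have n0 := phi_inner_alpha_nonneg hΦ hbase hF 0
  have n1 := phi_inner_alpha_nonneg hΦ hbase hF 1
  have n2 := phi_inner_alpha_nonneg hΦ hbase hF 2
  have n3 := phi_inner_alpha_nonneg hΦ hbase hF 3
  positivity

lemma sref_sq (αs : Fin 4 → V) (i : Fin 4) : sref (αs i) * sref (αs i) = 1 :=
  LinearEquiv.toLinearMap_injective (LinearMap.ext fun x => sref_sref (αs i) x)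

end Ctx5
section Ctx6

variable {Φ : Set V} {αs : Fin 4 → V} {Pos : Set V}

lemma pos_of_nat_combo (hΦ : IsRootSystem Φ) (hbase : IsBase Φ αs Pos) {γ : V}
    (hγΦ : γ ∈ Φ) (c : Fin 4 → ℕ) (h : γ = ∑ i, (c i : ℝ) • αs i) : γ ∈ Pos :=
  (hbase.mem_pos_iff γ hγΦ).mpr ⟨c, h⟩

lemma weyl_pos_map (hΦ : IsRootSystem Φ) (hbase : IsBase Φ αs Pos) {w : V ≃ₗ[ℝ] V}
    (hw : w ∈ weylGroup Φ) (hA : ∀ i : Fin 4, w (αs i) ∈ Pos) :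
    ∀ γ ∈ Pos, w γ ∈ Pos := by
  intro γ hγ
  obtain ⟨c, hc⟩ := (hbase.mem_pos_iff γ (hbase.pos_subset hγ)).mp hγ
  choose d hd using fun i : Fin 4 =>
    (hbase.mem_pos_iff _ (weyl_mem hΦ hw (hbase.mem i))).mp (hA i)
  apply pos_of_nat_combo hΦ hbase (weyl_mem hΦ hw (hbase.pos_subset hγ))
    (fun j => ∑ i, c i * d i j)
  rw [hc]
  rw [map_sum]
  have step1 : ∀ i : Fin 4, w ((c i : ℝ) • αs i) = ∑ j, ((c i * d i j : ℕ) : ℝ) • αs j := by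
    intro i
    rw [map_smul, hd i, Finset.smul_sum]
    refine Finset.sum_congr rfl fun j _ => ?_
    rw [smul_smul]
    push_cast
    ring_nf
  rw [Finset.sum_congr rfl fun i _ => step1 i, Finset.sum_comm]
  refine Finset.sum_congr rfl fun j _ => ?_
  rw [← Finset.sum_smul]
  congr 1
  push_cast
  ring

lemma weyl_fix_simples_eq_one (hbase : IsBase Φ αs Pos) {w : V ≃ₗ[ℝ] V}
    (hfix : ∀ i : Fin 4, w (αs i) = αs i) : w = 1 := by
  have hb : ⊤ ≤ Submodule.span ℝ (Set.range αs) := by rw [hbase.span_eq]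
  let b : Module.Basis (Fin 4) ℝ V := Module.Basis.mk hbase.indep hb
  have hbi : ∀ i, b i = αs i := fun i => congrFun (Module.Basis.coe_mk hbase.indep hb) i
  apply LinearEquiv.toLinearMap_injective
  apply Module.Basis.ext b
  intro i
  rw [hbi i]
  simpa using hfix i

lemma stab_aux (hΦ : IsRootSystem Φ) (hbase : IsBase Φ αs Pos) (hF : CartanIs αs cartanF) :
    ∀ n : ℕ, ∀ w : V ≃ₗ[ℝ] V, w ∈ weylGroup Φ → w (vecOf αs phiv) = vecOf αs phiv →
      (NSet Pos w).ncard = n → w ∈ parab αs {j | j ≠ 0} := by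
  intro n
  induction n using Nat.strong_induction_on with
  | _ n IH =>
  intro w hw hwφ hn
  by_cases hA : ∀ i : Fin 4, w (αs i) ∈ Pos
  · -- w maps all simple roots to positive roots: show w = 1
    have hPos : ∀ γ ∈ Pos, w γ ∈ Pos := weyl_pos_map hΦ hbase hw hA
    have hPosFin : Pos.Finite := hΦ.finite.subset hbase.pos_subset
    have himg : w '' Pos = Pos := by
      apply Set.eq_of_subset_of_ncard_le
      · rintro x ⟨γ, hγ, rfl⟩
        exact hPos γ hγ
      · rw [Set.ncard_image_of_injective _ w.injective]
      · exact hPosFin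
    have hinv : ∀ γ ∈ Pos, (w⁻¹ : V ≃ₗ[ℝ] V) γ ∈ Pos := by
      intro γ hγ
      rw [← himg] at hγ
      obtain ⟨δ, hδ, rfl⟩ := hγ
      rwa [inv_apply_of rfl]
    have hb : ⊤ ≤ Submodule.span ℝ (Set.range αs) := by rw [hbase.span_eq]
    set b : Module.Basis (Fin 4) ℝ V := Module.Basis.mk hbase.indep hb with hbdef
    have hbi : ∀ i, b i = αs i := fun i => congrFun (Module.Basis.coe_mk hbase.indep hb) i
    set H : V →ₗ[ℝ] ℝ := b.sumCoords with hHdef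
    have hHa : ∀ i : Fin 4, H (αs i) = 1 := by
      intro i
      rw [← hbi i, hHdef, Module.Basis.sumCoords_self_apply]
    have hHcombo : ∀ c : Fin 4 → ℕ, H (∑ i, (c i : ℝ) • αs i) = ((∑ i, c i : ℕ) : ℝ) := by
      intro c
      rw [map_sum]
      push_cast
      refine Finset.sum_congr rfl fun i _ => ?_
      rw [map_smul, hHa i, smul_eq_mul, mul_one]
    have hH1 : ∀ γ ∈ Pos, 1 ≤ H γ := by
      intro γ hγ
      obtain ⟨c, hc⟩ := (hbase.mem_pos_iff γ (hbase.pos_subset hγ)).mp hγ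
      rw [hc, hHcombo]
      have hγne : γ ≠ 0 := fun h => hΦ.nonzero (h ▸ hbase.pos_subset hγ)
      have hcne : ∑ i, c i ≠ 0 := by
        intro hzero
        apply hγne
        rw [hc]
        have hz : ∀ i ∈ (Finset.univ : Finset (Fin 4)), c i = 0 :=
          (Finset.sum_eq_zero_iff).mp hzero
        refine Finset.sum_eq_zero fun i hi => ?_
        rw [hz i hi]
        simp
      have : 1 ≤ ∑ i, c i := Nat.one_le_iff_ne_zero.mpr hcne
      exact_mod_cast this
    have hsimple : ∀ i : Fin 4, ∃ j : Fin 4, w (αs i) = αs j := by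
      intro i
      obtain ⟨d, hd⟩ := (hbase.mem_pos_iff _ (weyl_mem hΦ hw (hbase.mem i))).mp (hA i)
      have hub : ((∑ j, d j : ℕ) : ℝ) ≤ 1 := by
        have hiinv : (w⁻¹ : V ≃ₗ[ℝ] V) (w (αs i)) = αs i := inv_apply_of rfl
        have hkey : (1:ℝ) = ∑ j, (d j : ℝ) * H ((w⁻¹ : V ≃ₗ[ℝ] V) (αs j)) := by
          have e1 : H (αs i) = 1 := hHa i
          rw [← hiinv] at e1
          rw [hd] at e1
          rw [map_sum] at e1
          rw [← e1]
          rw [map_sum]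
          refine Finset.sum_congr rfl fun j _ => ?_
          rw [map_smul, map_smul]
          simp
        have hterm : ∀ j : Fin 4, (d j : ℝ) ≤ (d j : ℝ) * H ((w⁻¹ : V ≃ₗ[ℝ] V) (αs j)) := by
          intro j
          have h1 : 1 ≤ H ((w⁻¹ : V ≃ₗ[ℝ] V) (αs j)) :=
            hH1 _ (hinv _ (alpha_mem_pos hΦ hbase j))
          nlinarith [Nat.cast_nonneg (α := ℝ) (d j)]
        calc ((∑ j, d j : ℕ) : ℝ) = ∑ j, (d j : ℝ) := by push_cast; rfl
          _ ≤ ∑ j, (d j : ℝ) * H ((w⁻¹ : V ≃ₗ[ℝ] V) (αs j)) := Finset.sum_le_sum fun j _ => hterm j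
          _ = 1 := hkey.symm
      have hlb : 1 ≤ ((∑ j, d j : ℕ) : ℝ) := by
        have := hH1 _ (hA i)
        rw [hd, hHcombo] at this
        exact this
      have hsum1 : ∑ j, d j = 1 := by
        have h1 : ((∑ j, d j : ℕ) : ℝ) = 1 := le_antisymm hub hlb
        exact_mod_cast h1
      rw [Fin.sum_univ_four] at hsum1
      have hcases : (d 0 = 1 ∧ d 1 = 0 ∧ d 2 = 0 ∧ d 3 = 0)
          ∨ (d 0 = 0 ∧ d 1 = 1 ∧ d 2 = 0 ∧ d 3 = 0)
          ∨ (d 0 = 0 ∧ d 1 = 0 ∧ d 2 = 1 ∧ d 3 = 0)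
          ∨ (d 0 = 0 ∧ d 1 = 0 ∧ d 2 = 0 ∧ d 3 = 1) := by omega
      rw [hd, Fin.sum_univ_four]
      rcases hcases with ⟨e0,e1,e2,e3⟩|⟨e0,e1,e2,e3⟩|⟨e0,e1,e2,e3⟩|⟨e0,e1,e2,e3⟩
      · exact ⟨0, by rw [e0, e1, e2, e3]; norm_num⟩
      · exact ⟨1, by rw [e0, e1, e2, e3]; norm_num⟩
      · exact ⟨2, by rw [e0, e1, e2, e3]; norm_num⟩
      · exact ⟨3, by rw [e0, e1, e2, e3]; norm_num⟩
    choose σ hσ using hsimple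
    have hG : ∀ i j : Fin 4, BZ (eV (σ i)) (eV (σ j)) = BZ (eV i) (eV j) := by
      intro i j
      apply BZ_eq_of_inner hΦ hbase hF
      rw [← alpha_eq_vecOf, ← alpha_eq_vecOf, ← hσ i, ← hσ j, weyl_isom hΦ hw,
        alpha_eq_vecOf αs i, alpha_eq_vecOf αs j]
    have hσid : ∀ i, σ i = i := F7 σ hG
    have hfix : ∀ i : Fin 4, w (αs i) = αs i := by
      intro i
      rw [hσ i, hσid i]
    rw [weyl_fix_simples_eq_one hbase hfix]
    exact one_mem _
  · push_neg at hA
    obtain ⟨i, hi⟩ := hA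
    have hine : i ≠ 0 := by
      intro h0
      subst h0
      have hγ : -(w (αs 0)) ∈ Pos := by
        rcases hbase.pos_or_neg _ (weyl_mem hΦ hw (hbase.mem 0)) with h | h
        · exact absurd h hi
        · exact h
      have hdom := phi_dom hΦ hbase hF hγ
      rw [inner_neg_right] at hdom
      have hiso : ⟪vecOf αs phiv, w (αs 0)⟫ = ⟪vecOf αs phiv, αs 0⟫ := by
        conv_lhs => rw [← hwφ]
        rw [weyl_isom hΦ hw]
      rw [hiso, phi_alpha0 hΦ hbase hF] at hdom
      have := cc_pos hΦ hbase
      linarith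
    have hfixφ : sref (αs i) (vecOf αs phiv) = vecOf αs phiv := by
      rw [sref_vecOf hΦ hbase hF, F6 i hine]
    have hw' : w * sref (αs i) ∈ weylGroup Φ := mul_mem hw (sref_mem_weyl hbase i)
    have hfix' : (w * sref (αs i)) (vecOf αs phiv) = vecOf αs phiv := by
      show w (sref (αs i) (vecOf αs phiv)) = _
      rw [hfixφ, hwφ]
    have hlt : (NSet Pos (w * sref (αs i))).ncard < n :=
      hn ▸ NSet_card_lt hΦ hbase hF hw i hi
    have hmem' := IH _ hlt (w * sref (αs i)) hw' hfix' rfl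
    have hww : w = (w * sref (αs i)) * sref (αs i) := by
      rw [mul_assoc, sref_sq, mul_one]
    rw [hww]
    exact mul_mem hmem' (sref_mem_parab hine)

end Ctx6

theorem statement13 (Φ : Set V) (hΦ : IsRootSystem Φ)
    (αs : Fin 4 → V) (Pos : Set V) (hbase : IsBase Φ αs Pos)
    (hF : CartanIs αs cartanF)
    (φ : V) (hφ : φ = (2 : ℝ) • αs 0 + (3 : ℝ) • αs 1 + (4 : ℝ) • αs 2 + (2 : ℝ) • αs 3) :
    (∀ a b a' b' : V, a ∈ Φ → b ∈ Φ → a' ∈ Φ → b' ∈ Φ →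
        ⟪a, a⟫ = ⟪φ, φ⟫ → ⟪b, b⟫ = ⟪φ, φ⟫ → ⟪a', a'⟫ = ⟪φ, φ⟫ → ⟪b', b'⟫ = ⟪φ, φ⟫ →
        ⟪a, b⟫ = 0 → ⟪a', b'⟫ = 0 →
        ∃ w ∈ weylGroup Φ, w a = a' ∧ w b = b') ∧
      (∀ w ∈ weylGroup Φ, (w φ = φ ↔ w ∈ parab αs {j | j ≠ 0})) ∧
      (∀ a b : V, a ∈ Φ → b ∈ Φ → ⟪a, a⟫ = ⟪φ, φ⟫ → ⟪b, b⟫ = ⟪φ, φ⟫ →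
        ⟪a, φ⟫ = 0 → ⟪b, φ⟫ = 0 → ∃ w ∈ parab αs {j | j ≠ 0}, w a = b) := by

  have hφv : φ = vecOf αs phiv := by
    rw [hφ]
    show _ = ((2:ℤ):ℝ) • αs 0 + ((3:ℤ):ℝ) • αs 1 + ((4:ℤ):ℝ) • αs 2 + ((2:ℤ):ℝ) • αs 3
    norm_num
  refine ⟨?_, ?_, ?_⟩
  · intro a b a' b' ha hb ha' hb' hla hlb hla' hlb' hab ha'b'
    rw [hφv] at hla hlb hla' hlb'
    obtain ⟨w1, hw1W, hw1a, hw1b⟩ := pair_to_std hΦ hbase hF ha hb hla hlb hab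
    obtain ⟨w2, hw2W, hw2a, hw2b⟩ := pair_to_std hΦ hbase hF ha' hb' hla' hlb' ha'b'
    refine ⟨w2⁻¹ * w1, mul_mem (inv_mem hw2W) hw1W, ?_, ?_⟩
    · show (w2⁻¹ : V ≃ₗ[ℝ] V) (w1 a) = a'
      rw [hw1a, inv_apply_of hw2a]
    · show (w2⁻¹ : V ≃ₗ[ℝ] V) (w1 b) = b'
      rw [hw1b, inv_apply_of hw2b]
  · intro w hw
    constructor
    · intro hwφ
      refine stab_aux hΦ hbase hF _ w hw ?_ rfl
      rw [← hφv]
      exact hwφ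
    · intro hp
      rw [hφv]
      exact parab_fix hΦ hbase hF hp
  · intro a b ha hb hla hlb hoa hob
    rw [hφv] at hla hlb hoa hob
    obtain ⟨wa, hwaP, hwa⟩ := part3_lemma hΦ hbase hF ha hla hoa
    obtain ⟨wb, hwbP, hwb⟩ := part3_lemma hΦ hbase hF hb hlb hob
    refine ⟨wb⁻¹ * wa, mul_mem (inv_mem hwbP) hwaP, ?_⟩
    show (wb⁻¹ : V ≃ₗ[ℝ] V) (wa a) = b
    rw [hwa, inv_apply_of hwb]


end Paper
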